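/- arXiv:1201.0026 — 5 statements merged into one kernel-verified Lean document; each statement's English description precedes it below -/
import Mathlib

section
/- The transformation T_j is well defined on cyclic words: for every word w over {1,2,3,4,5}, every j in {1,2,3,4}, and every rotation ρ, the word T_j(ρ(w)) is a rotation of T_j(w). -/
/-- `sigma5 j x` is the representative in `{1,...,5}` of `x - j` mod 5. -/
def sigma5 (j x : ℕ) : ℕ := (x + 4 - j) % 5 + 1

/-- Position of a letter along the path graph 1—4—3—2—5. -/
def pos5 (x : ℕ) : ℕ :=
  match x with
  | 1 => 0 | 4 => 1 | 3 => 2 | 2 => 3 | 5 => 4 | _ => 0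

/-- The vertex at a given position of the path graph 1—4—3—2—5. -/
def vtx5 (i : ℕ) : ℕ := [1, 4, 3, 2, 5].getD i 0

/-- `ins5 x y` is the word of interior vertices, in order, of the unique simple
path from `x` to `y` in the path graph 1—4—3—2—5 (empty if `x = y`). -/
def ins5 (x y : ℕ) : List ℕ :=
  if pos5 x < pos5 y then
    (List.range (pos5 y - pos5 x - 1)).map (fun k => vtx5 (pos5 x + 1 + k))
  else
    (List.range (pos5 x - pos5 y - 1)).map (fun k => vtx5 (pos5 x - 1 - k))

/-- Graph distance in the path graph 1—4—3—2—5. -/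
def dist5 (x y : ℕ) : ℕ := max (pos5 x) (pos5 y) - min (pos5 x) (pos5 y)

/-- Linear transformation `T_j^{lin}`: subtract `j` mod 5 from each letter and insert,
between consecutive letters, the interior vertices of the connecting path (no wrap-around). -/
def Tlin (j : ℕ) : List ℕ → List ℕ
  | [] => []
  | [x] => [sigma5 j x]
  | x :: y :: rest => (sigma5 j x :: ins5 (sigma5 j x) (sigma5 j y)) ++ Tlin j (y :: rest)

/-- Cyclic transformation `T_j`: as `Tlin`, with the wrap-around insertion from the
last letter back to the first appended at the end. -/
def Tcyc (j : ℕ) (w : List ℕ) : List ℕ :=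
  Tlin j w ++ ins5 (sigma5 j (w.getLastD 0)) (sigma5 j (w.headD 0))

/-- A pair-word: a finite concatenation of the two-letter blocks 41, 43, 23, 25. -/
def IsPairWord (w : List ℕ) : Prop :=
  ∃ bs : List (List ℕ), (∀ b ∈ bs, b ∈ [[4,1],[4,3],[2,3],[2,5]]) ∧ w = bs.flatten

/-- `n`-fold repetition of a word. -/
def wpow (w : List ℕ) (n : ℕ) : List ℕ := (List.replicate n w).flatten

def blk5 (j : ℕ) (p : ℕ × ℕ) : List ℕ :=
  sigma5 j p.1 :: ins5 (sigma5 j p.1) (sigma5 j p.2)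

lemma ins5_self (x : ℕ) : ins5 x x = [] := by
  simp [ins5]

lemma Tlin_key (j : ℕ) : ∀ (l : List ℕ) (x z : ℕ),
    Tlin j (x :: l) ++ ins5 (sigma5 j ((x :: l).getLastD 0)) (sigma5 j z)
      = (((x :: l).zip (l ++ [z])).map (blk5 j)).flatten
  | [], x, z => by simp [Tlin, blk5]
  | y :: rest, x, z => by
    have ih := Tlin_key j rest y z
    simp only [Tlin, List.zip_cons_cons, List.map_cons, List.flatten_cons, List.cons_append]
    rw [List.append_assoc]
    rw [show ((x :: y :: rest).getLastD 0) = ((y :: rest).getLastD 0) by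
      simp [List.getLastD]]
    rw [ih]
    simp [blk5]

lemma Tcyc_eq (j : ℕ) (w : List ℕ) :
    Tcyc j w = ((w.zip (w.rotate 1)).map (blk5 j)).flatten := by
  cases w with
  | nil => simp [Tcyc, Tlin, ins5_self]
  | cons x l =>
    rw [List.rotate_cons_succ, List.rotate_zero]
    rw [Tcyc, show (x :: l).headD 0 = x from rfl]
    exact Tlin_key j l x x

lemma zip_rotate_one : ∀ (a b : List ℕ), a.length = b.length →
    (a.rotate 1).zip (b.rotate 1) = (a.zip b).rotate 1
  | [], [], _ => rfl
  | [], _ :: _, h => by simp at h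
  | _ :: _, [], h => by simp at h
  | x :: a, y :: b, h => by
    simp only [List.length_cons, Nat.succ_inj] at h
    rw [List.rotate_cons_succ, List.rotate_cons_succ, List.rotate_zero,
      List.rotate_zero, List.zip_cons_cons, List.rotate_cons_succ, List.rotate_zero,
      List.zip_append h]
    rfl

lemma flatten_rotate_one (M : List (List ℕ)) :
    (M.rotate 1).flatten ~r M.flatten := by
  cases M with
  | nil => rfl
  | cons A M' =>
    rw [List.rotate_cons_succ, List.rotate_zero, List.flatten_append,
      List.flatten_cons]
    simpa using (List.isRotated_append (l := M'.flatten) (l' := A))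

lemma Tcyc_rot1 (j : ℕ) (w : List ℕ) : Tcyc j (w.rotate 1) ~r Tcyc j w := by
  rw [Tcyc_eq, Tcyc_eq]
  rw [zip_rotate_one w (w.rotate 1) (by simp)]
  rw [List.map_rotate]
  exact flatten_rotate_one _

lemma Tcyc_rotn (j : ℕ) : ∀ (n : ℕ) (w : List ℕ), Tcyc j (w.rotate n) ~r Tcyc j w
  | 0, w => by rw [List.rotate_zero]
  | n + 1, w => by
    have : w.rotate (n + 1) = (w.rotate 1).rotate n := by
      rw [List.rotate_rotate, Nat.add_comm]
    rw [this]
    exact (Tcyc_rotn j n (w.rotate 1)).trans (Tcyc_rot1 j w)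

theorem stmt3 (w w' : List ℕ) (j : ℕ) (hj : j ∈ Finset.Icc 1 4)
    (hw : ∀ x ∈ w, x ∈ Finset.Icc 1 5) (hrot : w ~r w') :
    Tcyc j w ~r Tcyc j w' := by
  obtain ⟨n, hn⟩ := hrot
  rw [← hn]
  exact (Tcyc_rotn j n w).symm
end

section
/- Let R be the letterwise involution x ↦ 6−x on words over {1,2,3,4,5}. Then for every j in {1,2,3,4} and every word w, the word R(T_j(w)) is a rotation of T_{5−j}(R(w)). -/
/-! The reflection `x ↦ 6 - x` conjugates the shift `σ_j` into `σ_{5-j}` and, being an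
automorphism of the path 1—4—3—2—5, maps the interior of each path onto the interior of the
reflected path. Hence it commutes with the whole construction: `R (T_j w) = T_{5-j} (R w)`
on the nose, which is the rotation by zero. -/

lemma sigma5_mem_Icc (j x : ℕ) : sigma5 j x ∈ Finset.Icc 1 5 := by
  simp only [sigma5, Finset.mem_Icc]
  omega

lemma reflect_sigma5 {j x : ℕ} (hj : j ∈ Finset.Icc 1 4) (hx : x ∈ Finset.Icc 1 5) :
    6 - sigma5 j x = sigma5 (5 - j) (6 - x) := by
  simp only [sigma5, Finset.mem_Icc] at hj hx ⊢
  omega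

lemma map_reflect_ins5 {x y : ℕ} (hx : x ∈ Finset.Icc 1 5) (hy : y ∈ Finset.Icc 1 5) :
    (ins5 x y).map (fun z => 6 - z) = ins5 (6 - x) (6 - y) := by
  simp only [Finset.mem_Icc] at hx hy
  obtain ⟨hx1, hx2⟩ := hx
  obtain ⟨hy1, hy2⟩ := hy
  interval_cases x <;> interval_cases y <;> decide

lemma map_reflect_Tlin {j : ℕ} (hj : j ∈ Finset.Icc 1 4) : ∀ w : List ℕ,
    (∀ x ∈ w, x ∈ Finset.Icc 1 5) →
    (Tlin j w).map (fun x => 6 - x) = Tlin (5 - j) (w.map (fun x => 6 - x))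
  | [], _ => rfl
  | [x], hw => by
      simp [Tlin, reflect_sigma5 hj (hw x (by simp))]
  | x :: y :: rest, hw => by
      have ih := map_reflect_Tlin hj (y :: rest) (fun z hz => hw z (by simp [hz]))
      simp only [Tlin, List.map_append, List.map_cons, List.cons_append] at ih ⊢
      rw [map_reflect_ins5 (sigma5_mem_Icc j x) (sigma5_mem_Icc j y),
        reflect_sigma5 hj (hw x (by simp)), reflect_sigma5 hj (hw y (by simp)), ih]

lemma map_reflect_Tcyc {j : ℕ} (hj : j ∈ Finset.Icc 1 4) {w : List ℕ}
    (hw : ∀ x ∈ w, x ∈ Finset.Icc 1 5) :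
    (Tcyc j w).map (fun x => 6 - x) = Tcyc (5 - j) (w.map (fun x => 6 - x)) := by
  rcases w with _ | ⟨a, t⟩
  · simp [Tcyc, Tlin, ins5_self]
  · simp only [Tcyc, List.map_append, List.map_cons, List.headD_cons, List.getLastD_cons]
    rw [List.getLastD_map (f := fun x => 6 - x), ← List.map_cons, map_reflect_Tlin hj _ hw,
      map_reflect_ins5 (sigma5_mem_Icc j _) (sigma5_mem_Icc j _),
      reflect_sigma5 hj (hw _ List.getLastD_mem_cons), reflect_sigma5 hj (hw a (by simp))]

theorem stmt4 (w : List ℕ) (j : ℕ) (hj : j ∈ Finset.Icc 1 4)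
    (hw : ∀ x ∈ w, x ∈ Finset.Icc 1 5) :
    (Tcyc j w).map (fun x => 6 - x) ~r Tcyc (5 - j) (w.map (fun x => 6 - x)) := by
  rw [map_reflect_Tcyc hj hw]
end

section
/- Let w be a pair-word (concatenation of blocks from {41, 43, 23, 25}) of length at least 2. (a) If the last letter of w is 5, then T_1^{lin}(w) ends with 1,4. (b) If the last letter of w is 3, then T_4^{lin}(w) ends with 3,4. -/
/-! `Tlin j` maps suffixes to suffixes, so `Tlin j w` ends with the image of the last block
of `w`, and on blocks: `Tlin 1 [2,5] = [1,4]`, `Tlin 4 [4,3] = [5,2,3,4]`, `Tlin 4 [2,3] = [3,4]`. -/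

theorem Tlin_suffix_cons (j x : ℕ) (l : List ℕ) : Tlin j l <:+ Tlin j (x :: l) := by
  cases l with
  | nil => exact List.nil_suffix
  | cons y rest => exact List.suffix_append _ _

theorem Tlin_suffix_of_suffix (j : ℕ) {l₁ l₂ : List ℕ} (h : l₂ <:+ l₁) :
    Tlin j l₂ <:+ Tlin j l₁ := by
  obtain ⟨t, rfl⟩ := h
  induction t with
  | nil => exact List.suffix_refl _
  | cons x t ih => exact ih.trans (Tlin_suffix_cons j x _)

theorem IsPairWord.exists_block_suffix {w : List ℕ} (hw : IsPairWord w) (hne : w ≠ []) :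
    ∃ b ∈ [[4,1],[4,3],[2,3],[2,5]], b <:+ w ∧ w.getLastD 0 = b.getLastD 0 := by
  obtain ⟨bs, hbs, rfl⟩ := hw
  rcases List.eq_nil_or_concat bs with rfl | ⟨l, b, rfl⟩
  · exact absurd rfl hne
  have hb := hbs b (by simp)
  refine ⟨b, hb, by simp, ?_⟩
  have hb_ne : b ≠ [] := by fin_cases hb <;> simp
  simp [List.getLast?_append, List.getLast?_eq_some_getLast hb_ne]

theorem stmt6_general (w : List ℕ) (hw : IsPairWord w) :
    (w.getLastD 0 = 5 → ∃ t, Tlin 1 w = t ++ [1, 4]) ∧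
    (w.getLastD 0 = 3 → ∃ t, Tlin 4 w = t ++ [3, 4]) := by
  refine ⟨fun h5 => ?_, fun h3 => ?_⟩
  · obtain ⟨b, hb, hbw, hlast⟩ := hw.exists_block_suffix (by rintro rfl; simp at h5)
    fin_cases hb <;> rw [hlast] at h5 <;> try contradiction
    obtain ⟨t, ht⟩ := Tlin_suffix_of_suffix 1 hbw
    exact ⟨t, ht.symm⟩
  · obtain ⟨b, hb, hbw, hlast⟩ := hw.exists_block_suffix (by rintro rfl; simp at h3)
    fin_cases hb <;> rw [hlast] at h3 <;> try contradiction
    all_goals obtain ⟨t, ht⟩ := Tlin_suffix_of_suffix 4 hbw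
    · exact ⟨t ++ [5, 2], by rw [← ht, List.append_assoc]; rfl⟩
    · exact ⟨t, ht.symm⟩

theorem stmt6 (w : List ℕ) (hw : IsPairWord w) (hlen : 2 ≤ w.length) :
    (w.getLastD 0 = 5 → ∃ t, Tlin 1 w = t ++ [1, 4]) ∧
    (w.getLastD 0 = 3 → ∃ t, Tlin 4 w = t ++ [3, 4]) :=
  stmt6_general w hw
end

section
/- Let x and y be pair-words (concatenations of blocks from {41, 43, 23, 25}) each beginning with the letter 2 and ending with the letter 3. Then there exist pair-words x' and y', each beginning with 2 and ending with 3, such that for every n ≥ 0 the cyclic word T_2((x ++ y)^n ++ x) is cyclically equal to (x' ++ y')^n ++ x'. -/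
/-! ### Auxiliary machinery -/

/-- The list of admissible blocks. -/
def PB : List (List ℕ) := [[4,1],[4,3],[2,3],[2,5]]

/-- The chunk contributed by letter `b` following letter `a` in `Tlin 2`. -/
def Tstep (a b : ℕ) : List ℕ := ins5 (sigma5 2 a) (sigma5 2 b) ++ [sigma5 2 b]

/-- `Tlin 2` after the first letter, as a fold of chunks. -/
def Trest (a : ℕ) : List ℕ → List ℕ
  | [] => []
  | b :: l => Tstep a b ++ Trest b l

/-- Carry letters of the block parsing of the image. -/
def carry (t : ℕ) : List ℕ := if t = 1 then [4] else if t = 4 then [2] else []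

/-- Blocks produced by one original block `[h,u]` read after last letter `t`. -/
def pieces (t h u : ℕ) : List (List ℕ) :=
  (if h = 4 then (if t = 5 then [] else [[4,3]])
   else (if t = 5 then [[2,5]] else [[4,3],[2,5]])) ++
  (if u = 3 then [[2,3],[4,1]] else [[2,3]])

theorem master : ∀ t ∈ ([1,3,5] : List ℕ), ∀ b ∈ PB,
  carry t ++ (Tstep t (b.headD 0) ++ Tstep (b.headD 0) (b.getLastD 0))
    = (pieces t (b.headD 0) (b.getLastD 0)).flatten ++ carry (b.getLastD 0) ∧
  (∀ d ∈ pieces t (b.headD 0) (b.getLastD 0), d ∈ PB) ∧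
  (b.getLastD 0 = 1 ∨ b.getLastD 0 = 3 ∨ b.getLastD 0 = 5) := by decide

theorem gl_cons (a d : ℕ) (l : List ℕ) : (a :: l).getLastD d = l.getLastD a := by
  cases l <;> rfl

theorem Tlin_eq (a : ℕ) (l : List ℕ) : Tlin 2 (a :: l) = sigma5 2 a :: Trest a l := by
  induction l generalizing a with
  | nil => simp [Tlin, Trest]
  | cons b l ih => simp [Tlin, Trest, ih, Tstep]

theorem Trest_append (a : ℕ) (l m : List ℕ) :
    Trest a (l ++ m) = Trest a l ++ Trest (l.getLastD a) m := by
  induction l generalizing a with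
  | nil => simp [Trest]
  | cons b l ih =>
    rw [List.cons_append, gl_cons]
    show Tstep a b ++ Trest b (l ++ m) = Trest a (b :: l) ++ Trest (l.getLastD b) m
    rw [ih]
    show Tstep a b ++ (Trest b l ++ Trest (l.getLastD b) m)
      = (Tstep a b ++ Trest b l) ++ Trest (l.getLastD b) m
    rw [List.append_assoc]

theorem getLastD_irrel (m : List ℕ) (h : m ≠ []) (d₁ d₂ : ℕ) :
    m.getLastD d₁ = m.getLastD d₂ := by
  cases m with
  | nil => exact absurd rfl h
  | cons a m => rw [gl_cons, gl_cons]

theorem getLastD_app (l m : List ℕ) (d : ℕ) (h : m ≠ []) :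
    (l ++ m).getLastD d = m.getLastD d := by
  induction l generalizing d with
  | nil => rfl
  | cons a l ih =>
    rw [List.cons_append, gl_cons, ih a]
    exact getLastD_irrel m h a d

theorem carry_trest (bs : List (List ℕ)) (hbs : ∀ b ∈ bs, b ∈ PB) :
    ∀ t, (t = 1 ∨ t = 3 ∨ t = 5) →
    ∃ cs : List (List ℕ), (∀ c ∈ cs, c ∈ PB) ∧
      carry t ++ Trest t bs.flatten = cs.flatten ++ carry (bs.flatten.getLastD t) := by
  induction bs with
  | nil => intro t _; exact ⟨[], by simp, by simp [Trest]⟩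
  | cons b bs ih =>
    intro t ht
    have hb : b ∈ PB := hbs b (by simp)
    have hbs' : ∀ b ∈ bs, b ∈ PB := fun c hc => hbs c (by simp [hc])
    have htmem : t ∈ ([1,3,5] : List ℕ) := by rcases ht with rfl|rfl|rfl <;> simp
    obtain ⟨hkey, hpieces, hu⟩ := master t htmem b hb
    set h := b.headD 0 with hh
    set u := b.getLastD 0 with huu
    have hbshape : b = [h, u] := by
      have hb' : b = [4,1] ∨ b = [4,3] ∨ b = [2,3] ∨ b = [2,5] := by
        simpa [PB] using hb
      rcases hb' with rfl|rfl|rfl|rfl <;> rfl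
    obtain ⟨cs, hcs, hcseq⟩ := ih hbs' u hu
    refine ⟨pieces t h u ++ cs, ?_, ?_⟩
    · intro c hc
      rcases List.mem_append.1 hc with hc | hc
      · exact hpieces c hc
      · exact hcs c hc
    · have hfl : (b :: bs).flatten = h :: u :: bs.flatten := by rw [hbshape]; rfl
      rw [hfl]
      have hT : Trest t (h :: u :: bs.flatten)
          = Tstep t h ++ (Tstep h u ++ Trest u bs.flatten) := rfl
      rw [hT]
      have hlast : (h :: u :: bs.flatten).getLastD t = bs.flatten.getLastD u := by
        rw [gl_cons, gl_cons]
      rw [hlast]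
      calc carry t ++ (Tstep t h ++ (Tstep h u ++ Trest u bs.flatten))
          = (carry t ++ (Tstep t h ++ Tstep h u)) ++ Trest u bs.flatten := by
            simp [List.append_assoc]
        _ = ((pieces t h u).flatten ++ carry u) ++ Trest u bs.flatten := by rw [hkey]
        _ = (pieces t h u).flatten ++ (carry u ++ Trest u bs.flatten) := by
            simp [List.append_assoc]
        _ = (pieces t h u).flatten ++ (cs.flatten ++ carry (bs.flatten.getLastD u)) := by
            rw [hcseq]
        _ = (pieces t h u ++ cs).flatten ++ carry (bs.flatten.getLastD u) := by
            simp [List.append_assoc]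

/-- Segment lemma: the (rotated) image of a segment. -/
theorem seg (s : List ℕ) (hs : IsPairWord s) (h2 : s.headD 0 = 2) (h3 : s.getLastD 0 = 3) :
    ∃ s', IsPairWord s' ∧ s'.headD 0 = 2 ∧ s'.getLastD 0 = 3 ∧
      Trest 3 s ++ [4,3] = [4,3] ++ s' := by
  obtain ⟨bs, hbs, rfl⟩ := hs
  cases bs with
  | nil => simp at h2
  | cons b bs =>
    have hb : b = [4,1] ∨ b = [4,3] ∨ b = [2,3] ∨ b = [2,5] := by
      simpa [PB] using hbs b (by simp)
    have hbs' : ∀ c ∈ bs, c ∈ PB := fun c hc => hbs c (by simp [hc])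
    have hq : ∃ q, (q = 3 ∨ q = 5) ∧ b = [2, q] := by
      rcases hb with rfl|rfl|rfl|rfl
      · exfalso; simp at h2
      · exfalso; simp at h2
      · exact ⟨3, Or.inl rfl, rfl⟩
      · exact ⟨5, Or.inr rfl, rfl⟩
    obtain ⟨q, hq35, rfl⟩ := hq
    have hfl : ([2, q] :: bs).flatten = 2 :: q :: bs.flatten := rfl
    rw [hfl] at h3 ⊢
    have hlast3 : bs.flatten.getLastD q = 3 := by rw [gl_cons, gl_cons] at h3; exact h3
    have hqmem : q = 1 ∨ q = 3 ∨ q = 5 := by rcases hq35 with rfl|rfl <;> simp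
    obtain ⟨cs, hcs, hcseq⟩ := carry_trest bs hbs' q hqmem
    rw [hlast3] at hcseq
    have hcseq' : Trest q bs.flatten = cs.flatten := by
      have hcq : carry q = [] := by rcases hq35 with rfl|rfl <;> rfl
      have hc3 : carry 3 = [] := rfl
      rw [hcq, hc3, List.nil_append, List.append_nil] at hcseq
      exact hcseq
    have hTr : Trest 3 (2 :: q :: bs.flatten)
        = Tstep 3 2 ++ (Tstep 2 q ++ Trest q bs.flatten) := rfl
    rcases hq35 with rfl | rfl
    · refine ⟨([[2,5],[2,3],[4,1]] ++ cs ++ [[4,3]]).flatten,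
        ⟨[[2,5],[2,3],[4,1]] ++ cs ++ [[4,3]], ?_, rfl⟩, ?_, ?_, ?_⟩
      · intro c hc
        simp only [List.mem_append, List.mem_cons, List.not_mem_nil, or_false] at hc
        rcases hc with ((rfl|rfl|rfl)|hc)|rfl
        · decide
        · decide
        · decide
        · exact hcs c hc
        · decide
      · simp
      · rw [List.flatten_append, getLastD_app _ _ _ (by decide)]; rfl
      · rw [hTr, hcseq']
        have e1 : Tstep 3 2 = [4,3,2,5] := by decide
        have e2 : Tstep 2 3 = [2,3,4,1] := by decide
        rw [e1, e2]
        simp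
    · refine ⟨([[2,5],[2,3]] ++ cs ++ [[4,3]]).flatten,
        ⟨[[2,5],[2,3]] ++ cs ++ [[4,3]], ?_, rfl⟩, ?_, ?_, ?_⟩
      · intro c hc
        simp only [List.mem_append, List.mem_cons, List.not_mem_nil, or_false] at hc
        rcases hc with ((rfl|rfl)|hc)|rfl
        · decide
        · decide
        · exact hcs c hc
        · decide
      · simp
      · rw [List.flatten_append, getLastD_app _ _ _ (by decide)]; rfl
      · rw [hTr, hcseq']
        have e1 : Tstep 3 2 = [4,3,2,5] := by decide
        have e2 : Tstep 2 5 = [2,3] := by decide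
        rw [e1, e2]
        simp

theorem stmt13 (x y : List ℕ) (hx : IsPairWord x) (hy : IsPairWord y)
    (hxh : x.headD 0 = 2) (hxl : x.getLastD 0 = 3)
    (hyh : y.headD 0 = 2) (hyl : y.getLastD 0 = 3) :
    ∃ x' y' : List ℕ, IsPairWord x' ∧ IsPairWord y' ∧
      x'.headD 0 = 2 ∧ x'.getLastD 0 = 3 ∧ y'.headD 0 = 2 ∧ y'.getLastD 0 = 3 ∧
      ∀ n : ℕ, Tcyc 2 (wpow (x ++ y) n ++ x) ~r wpow (x' ++ y') n ++ x' := by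
  obtain ⟨x', hx'pw, hx'h, hx'l, hxeq⟩ := seg x hx hxh hxl
  obtain ⟨y', hy'pw, hy'h, hy'l, hyeq⟩ := seg y hy hyh hyl
  have hxne : x ≠ [] := by intro h; rw [h] at hxh; simp at hxh
  have hyne : y ≠ [] := by intro h; rw [h] at hyh; simp at hyh
  have hxl3 : x.getLastD 3 = 3 := by rw [getLastD_irrel x hxne 3 0]; exact hxl
  have hyl3 : y.getLastD 3 = 3 := by rw [getLastD_irrel y hyne 3 0]; exact hyl
  have key : ∀ n : ℕ, Trest 3 (wpow (x ++ y) n ++ x) ++ [4,3]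
      = [4,3] ++ (wpow (x' ++ y') n ++ x') := by
    intro n
    induction n with
    | zero => simpa [wpow] using hxeq
    | succ n ih =>
      have hw : wpow (x ++ y) (n+1) ++ x = (x ++ y) ++ (wpow (x ++ y) n ++ x) := by
        simp [wpow, List.replicate_succ]
      have hw' : wpow (x' ++ y') (n+1) ++ x' = (x' ++ y') ++ (wpow (x' ++ y') n ++ x') := by
        simp [wpow, List.replicate_succ]
      rw [hw, hw', Trest_append, getLastD_app x y 3 hyne, hyl3, Trest_append, hxl3]
      calc (Trest 3 x ++ Trest 3 y) ++ Trest 3 (wpow (x ++ y) n ++ x) ++ [4,3]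
          = Trest 3 x ++ Trest 3 y ++ (Trest 3 (wpow (x ++ y) n ++ x) ++ [4,3]) := by
            simp [List.append_assoc]
        _ = Trest 3 x ++ Trest 3 y ++ ([4,3] ++ (wpow (x' ++ y') n ++ x')) := by rw [ih]
        _ = Trest 3 x ++ (Trest 3 y ++ [4,3]) ++ (wpow (x' ++ y') n ++ x') := by
            simp [List.append_assoc]
        _ = Trest 3 x ++ ([4,3] ++ y') ++ (wpow (x' ++ y') n ++ x') := by rw [hyeq]
        _ = (Trest 3 x ++ [4,3]) ++ (y' ++ (wpow (x' ++ y') n ++ x')) := by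
            simp [List.append_assoc]
        _ = ([4,3] ++ x') ++ (y' ++ (wpow (x' ++ y') n ++ x')) := by rw [hxeq]
        _ = [4,3] ++ ((x' ++ y') ++ (wpow (x' ++ y') n ++ x')) := by
            simp [List.append_assoc]
  refine ⟨x', y', hx'pw, hy'pw, hx'h, hx'l, hy'h, hy'l, ?_⟩
  intro n
  set w := wpow (x ++ y) n ++ x with hwdef
  have hwlast : w.getLastD 0 = 3 := by rw [hwdef, getLastD_app _ x 0 hxne]; exact hxl
  have hwhead : w.headD 0 = 2 := by
    rw [hwdef]
    cases n with
    | zero => simpa [wpow] using hxh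
    | succ n =>
      obtain ⟨a, xt, rfl⟩ := List.exists_cons_of_ne_nil hxne
      simp only [List.headD_cons] at hxh
      subst hxh
      simp [wpow, List.replicate_succ]
  obtain ⟨t, ht⟩ : ∃ t, w = 2 :: t := by
    cases hw : w with
    | nil => rw [hw] at hwhead; simp at hwhead
    | cons a u => rw [hw] at hwhead; simp at hwhead; exact ⟨u, by rw [hwhead]⟩
  have hT : Tcyc 2 w = (5 :: Trest 2 t) ++ [4,3,2] := by
    rw [Tcyc, hwlast, hwhead, ht, Tlin_eq]
    have h2 : ins5 (sigma5 2 3) (sigma5 2 2) = [4,3,2] := by decide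
    have h1 : sigma5 2 2 = 5 := rfl
    rw [h2, h1]
  have hTr : Trest 3 w = [4,3,2,5] ++ Trest 2 t := by
    rw [ht]
    have h1 : Trest 3 (2 :: t) = Tstep 3 2 ++ Trest 2 t := rfl
    have h2 : Tstep 3 2 = [4,3,2,5] := by decide
    rw [h1, h2]
  have hW : wpow (x' ++ y') n ++ x' = [2,5] ++ Trest 2 t ++ [4,3] := by
    have h1 := key n
    rw [← hwdef, hTr] at h1
    have h2 : [4,3] ++ ([2,5] ++ Trest 2 t ++ [4,3])
        = [4,3] ++ (wpow (x' ++ y') n ++ x') := by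
      rw [← h1]; simp [List.append_assoc]
    exact (List.append_cancel_left h2).symm
  have e1 : Tcyc 2 w = ([5] ++ Trest 2 t ++ [4,3]) ++ [2] := by rw [hT]; simp
  have e2 : wpow (x' ++ y') n ++ x' = [2] ++ ([5] ++ Trest 2 t ++ [4,3]) := by
    rw [hW]; simp
  rw [e1, e2]
  exact List.isRotated_append
end

section
/- Let x and y be pair-words (concatenations of blocks from {41, 43, 23, 25}) each beginning with the letter 2 and ending with the letter 3. Then there exist pair-words x' and y', each beginning with 4 and ending with 3, such that for every n ≥ 0 the cyclic word T_3((x ++ y)^n ++ x) is cyclically equal to (x' ++ y')^n ++ x'. -/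
def A5 (w : List ℕ) : List ℕ := Tlin 3 w ++ ins5 (sigma5 3 (w.getLastD 0)) (sigma5 3 2)

lemma TlinSplit (j : ℕ) : ∀ u v : List ℕ, u ≠ [] → v ≠ [] →
    Tlin j (u ++ v) = Tlin j u ++ ins5 (sigma5 j (u.getLastD 0)) (sigma5 j (v.headD 0)) ++ Tlin j v := by
  intro u
  induction u with
  | nil => intro v h _; exact absurd rfl h
  | cons a u ih =>
    intro v _ hv
    cases u with
    | nil =>
      cases v with
      | nil => exact absurd rfl hv
      | cons c w => simp [Tlin]
    | cons b u' =>
      have h := ih v (by simp) hv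
      simp only [List.cons_append] at *
      rw [Tlin, h, Tlin]
      simp [List.getLastD_cons, List.append_assoc]

def base5 : List ℕ → List (List ℕ)
  | [4,1] => [[4,1],[4,3]]
  | [4,3] => [[4,1],[4,3],[2,5],[2,3]]
  | [2,3] => [[4,3],[2,5],[2,3]]
  | [2,5] => [[4,3],[2,3]]
  | _ => []

def nexthead5 : List (List ℕ) → ℕ
  | [] => 2
  | b :: _ => b.headD 0

def pre5 (s : ℕ) : List ℕ := if s = 4 then [4] else []

lemma Apeel (a b c : ℕ) (w : List ℕ) :
    A5 (a :: b :: c :: w) = (sigma5 3 a :: ins5 (sigma5 3 a) (sigma5 3 b)) ++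
      (sigma5 3 b :: ins5 (sigma5 3 b) (sigma5 3 c)) ++ A5 (c :: w) := by
  simp [A5, Tlin, List.getLastD_cons, List.append_assoc]

lemma combo : ∀ bs : List (List ℕ),
    (∀ b ∈ bs, b ∈ [[4,1],[4,3],[2,3],[2,5]]) → bs ≠ [] →
    pre5 (nexthead5 bs) ++ A5 bs.flatten = (bs.flatMap base5).flatten := by
  intro bs
  induction bs with
  | nil => intro _ h; exact absurd rfl h
  | cons b rest ih =>
    intro hv _
    have hb : b ∈ [[4,1],[4,3],[2,3],[2,5]] := hv b (by simp)
    cases rest with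
    | nil =>
      fin_cases hb <;> decide
    | cons r rest' =>
      have hr : r ∈ [[4,1],[4,3],[2,3],[2,5]] := hv r (by simp)
      have hIH := ih (fun b hb => hv b (by simp [hb])) (by simp)
      fin_cases hb <;> fin_cases hr <;>
        · simp only [List.flatten_cons, List.cons_append, List.nil_append,
            List.flatMap_cons] at hIH ⊢
          rw [Apeel]
          simp only [nexthead5, List.headD_cons] at hIH ⊢
          rw [List.flatten_append, ← hIH]
          simp [pre5, sigma5, ins5, pos5, vtx5, base5, List.range_succ, List.append_assoc]

lemma headD_append_left (l s : List ℕ) (h : l ≠ []) : (l ++ s).headD 0 = l.headD 0 := by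
  cases l with
  | nil => exact absurd rfl h
  | cons a t => simp

lemma getLastD_indep (s : List ℕ) (h : s ≠ []) (d : ℕ) : s.getLastD d = s.getLastD 0 := by
  cases s with
  | nil => exact absurd rfl h
  | cons a t => rw [List.getLastD_cons, List.getLastD_cons]

lemma getLastD_append_right (l s : List ℕ) (h : s ≠ []) :
    (l ++ s).getLastD 0 = s.getLastD 0 := by
  induction l generalizing s with
  | nil => simp
  | cons b l ih =>
    cases l with
    | nil =>
      cases s with
      | nil => exact absurd rfl h
      | cons a t => simp [List.getLastD_cons, getLastD_indep _ h]
    | cons c l' =>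
      rw [List.cons_append, List.getLastD_cons, getLastD_indep _ (by simp [h]), ih _ h]

lemma Atop (w : List ℕ) (h : w.headD 0 = 2) : Tcyc 3 w = A5 w := by
  unfold Tcyc A5; rw [h]

lemma A_append (u v : List ℕ) (hu : u ≠ []) (hv : v ≠ []) (hvh : v.headD 0 = 2) :
    A5 (u ++ v) = A5 u ++ A5 v := by
  unfold A5
  rw [TlinSplit 3 u v hu hv, hvh, getLastD_append_right u v hv]
  simp [List.append_assoc]

lemma A_head (x : List ℕ) (h : x.headD 0 = 2) : (A5 x).headD 0 = 4 := by
  cases x with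
  | nil => simp at h
  | cons a t =>
    simp only [List.headD_cons] at h; subst h
    cases t <;> simp [A5, Tlin] <;> decide

lemma A_last (x : List ℕ) (h : x.getLastD 0 = 3) : (A5 x).getLastD 0 = 3 := by
  unfold A5
  rw [h, getLastD_append_right _ _ (by decide)]
  decide

lemma wpow_succ (w : List ℕ) (n : ℕ) : wpow w (n+1) = w ++ wpow w n := by
  simp [wpow, List.replicate_succ]

lemma ne_nil_of_headD (x : List ℕ) (h : x.headD 0 = 2) : x ≠ [] := by
  cases x <;> simp_all

lemma head_pow (x y : List ℕ) (hxh : x.headD 0 = 2) (n : ℕ) :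
    (wpow (x ++ y) n ++ x).headD 0 = 2 := by
  have hx0 := ne_nil_of_headD x hxh
  cases n with
  | zero => simpa [wpow] using hxh
  | succ n =>
    rw [wpow_succ, List.append_assoc, List.append_assoc,
      headD_append_left x _ hx0]
    exact hxh

lemma mainEq (x y : List ℕ) (hxh : x.headD 0 = 2) (hyh : y.headD 0 = 2) :
    ∀ n, A5 (wpow (x ++ y) n ++ x) = wpow (A5 x ++ A5 y) n ++ A5 x := by
  have hx0 := ne_nil_of_headD x hxh
  have hy0 := ne_nil_of_headD y hyh
  intro n
  induction n with
  | zero => simp [wpow]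
  | succ n ih =>
    have htail0 : wpow (x ++ y) n ++ x ≠ [] := by
      intro h; exact hx0 (List.append_eq_nil_iff.mp h).2
    have htailh : (wpow (x ++ y) n ++ x).headD 0 = 2 := head_pow x y hxh n
    rw [wpow_succ, List.append_assoc, List.append_assoc,
      A_append x (y ++ (wpow (x ++ y) n ++ x)) hx0 (by simp [hy0])
        (by rw [headD_append_left y _ hy0]; exact hyh),
      A_append y _ hy0 htail0 htailh, ih, wpow_succ]
    simp [List.append_assoc]

lemma A_pairword (x : List ℕ) (hx : IsPairWord x) (hxh : x.headD 0 = 2) :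
    IsPairWord (A5 x) := by
  obtain ⟨bs, hv, rfl⟩ := hx
  have hbs0 : bs ≠ [] := by
    rintro rfl; simp [List.flatten] at hxh
  have hnh : nexthead5 bs = 2 := by
    cases bs with
    | nil => exact absurd rfl hbs0
    | cons b rest =>
      have hb : b ∈ [[4,1],[4,3],[2,3],[2,5]] := hv b (by simp)
      have : b.headD 0 = (List.flatten (b :: rest)).headD 0 := by
        rw [List.flatten_cons, headD_append_left]
        fin_cases hb <;> simp
      simp only [nexthead5]
      rw [this, hxh]
  have hc := combo bs hv hbs0
  rw [hnh] at hc
  have hc' : A5 bs.flatten = (bs.flatMap base5).flatten := by simpa [pre5] using hc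
  refine ⟨bs.flatMap base5, ?_, hc'⟩
  intro b hb
  rw [List.mem_flatMap] at hb
  obtain ⟨a, ha, hb⟩ := hb
  have := hv a ha
  fin_cases this <;> simp_all [base5] <;> rcases hb with rfl|rfl|rfl|rfl <;> simp


theorem stmt14 (x y : List ℕ) (hx : IsPairWord x) (hy : IsPairWord y)
    (hxh : x.headD 0 = 2) (hxl : x.getLastD 0 = 3)
    (hyh : y.headD 0 = 2) (hyl : y.getLastD 0 = 3) :
    ∃ x' y' : List ℕ, IsPairWord x' ∧ IsPairWord y' ∧
      x'.headD 0 = 4 ∧ x'.getLastD 0 = 3 ∧ y'.headD 0 = 4 ∧ y'.getLastD 0 = 3 ∧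
      ∀ n : ℕ, Tcyc 3 (wpow (x ++ y) n ++ x) ~r wpow (x' ++ y') n ++ x' := by
  refine ⟨A5 x, A5 y, A_pairword x hx hxh, A_pairword y hy hyh,
    A_head x hxh, A_last x hxl, A_head y hyh, A_last y hyl, fun n => ?_⟩
  rw [Atop _ (head_pow x y hxh n), mainEq x y hxh hyh n]
end
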